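/- arXiv:1308.5477 — 5 statements merged into one kernel-verified Lean document; each statement's English description precedes it below -/
import Mathlib

section
/- Let p be a prime, G a finite group, S a normal subgroup of G of order coprime to p, and P a p-subgroup of G such that G = S·C_G(P). Then P is abelian. -/
/-- If `S` is a normal subgroup of a finite group `G` of order coprime to `p`,
and `P` is a `p`-subgroup of `G` such that `G = S·C_G(P)`, then `P` is abelian. -/
theorem stmt_2 (p : ℕ) (hp : p.Prime) (G : Type*) [Group G] [Finite G]
    (S : Subgroup G) (hS : S.Normal) (hScop : Nat.Coprime (Nat.card S) p)
    (P : Subgroup G) (hP : IsPGroup p P)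
    (hfact : ∀ g : G, ∃ s ∈ S, ∃ c ∈ Subgroup.centralizer (P : Set G), g = s * c) :
    ∀ x ∈ P, ∀ y ∈ P, x * y = y * x := by
  intro x hx y hy
  obtain ⟨s, hs, c, hc, hxsc⟩ := hfact x
  -- the commutator z = x*y*x⁻¹*y⁻¹
  set z : G := x * y * x⁻¹ * y⁻¹ with hz
  have hcy : c * y = y * c := (Subgroup.mem_centralizer_iff.mp hc y hy).symm
  have hzS : z ∈ S := by
    have : z = s * (y * s⁻¹ * y⁻¹) := by
      rw [hz, hxsc]
      group
      rw [show s * c * y = s * y * c by rw [mul_assoc, hcy, mul_assoc]]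
      group
    rw [this]
    exact S.mul_mem hs (hS.conj_mem _ (S.inv_mem hs) y)
  have hzP : z ∈ P := P.mul_mem (P.mul_mem (P.mul_mem hx hy) (P.inv_mem hx)) (P.inv_mem hy)
  obtain ⟨k, hk⟩ := hP ⟨z, hzP⟩
  have hdvd1 : orderOf z ∣ p ^ k := by
    apply orderOf_dvd_of_pow_eq_one
    have := congrArg (Subtype.val) hk
    simpa using this
  have hdvd2 : orderOf z ∣ Nat.card S := by
    have : orderOf (⟨z, hzS⟩ : S) ∣ Nat.card S := orderOf_dvd_natCard _
    rwa [Subgroup.orderOf_mk] at this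
  have hcop : Nat.Coprime (Nat.card S) (p ^ k) := hScop.pow_right k
  have : orderOf z = 1 := Nat.eq_one_of_dvd_coprimes hcop hdvd2 hdvd1
  have hz1 : z = 1 := orderOf_eq_one_iff.mp this
  have := hz1
  rw [hz] at this
  calc x * y = (x * y * x⁻¹ * y⁻¹) * (y * x) := by group
    _ = y * x := by rw [this, one_mul]
end

section
/- Let p be a prime, G a finite group, S a normal subgroup of G of order coprime to p, and P a p-subgroup of G such that G = S·C_G(P). Then for every p-subgroup Q of G with Q ≤ C_G(P), the normalizer of Q factorizes as N_G(Q) = C_S(Q) · N_{C_G(P)}(Q), where C_S(Q) = S ∩ C_G(Q) and N_{C_G(P)}(Q) = C_G(P) ∩ N_G(Q): every element of N_G(Q) is a product of an element of S centralizing Q and an element of C_G(P) normalizing Q. -/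
/-!
Write `g = s c` with `s ∈ S` and `c ∈ H = C_G(P)`. Since `g` normalizes `Q`, the conjugate
`s⁻¹ Q s = c Q c⁻¹` lies in `H`, and writing `s⁻¹ q s = (s⁻¹ q s q⁻¹) q` shows that it lies in
`(S ∩ H) Q`. In that group the `p`-subgroup `Q` has the normal `p'`-complement `S ∩ H`, so it is a
Sylow subgroup, and Sylow's theorem yields `a ∈ S ∩ H` with `s⁻¹ Q s ≤ a Q a⁻¹`. Hence `s a ∈ S`
normalizes `Q`; as `[s a, Q] ≤ S ∩ Q = 1` it even centralizes `Q`, and `g = (s a)(a⁻¹ c)` with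
`a⁻¹ c ∈ H ∩ N_G(Q)`.
-/

open Subgroup Pointwise
open scoped commutatorElement

namespace Subgroup

variable {G : Type*} [Group G]

theorem conj_smul_eq_self_iff {H : Subgroup G} {g : G} :
    MulAut.conj g • H = H ↔ g ∈ normalizer (H : Set G) :=
  mem_normalizer_iff_map_conj_eq.symm

theorem mem_normalizer_of_le_conj_smul [Finite G] {H : Subgroup G} {g : G}
    (h : H ≤ MulAut.conj g • H) : g ∈ normalizer (H : Set G) :=
  conj_smul_eq_self_iff.mp <| (eq_of_le_of_card_ge h
    (Nat.card_congr (equivSMul (MulAut.conj g) H).toEquiv).ge).symm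

theorem mem_centralizer_of_mem_normalizer_of_disjoint {S Q : Subgroup G} [S.Normal]
    (hSQ : Disjoint S Q) {x : G} (hxS : x ∈ S) (hxQ : x ∈ normalizer (Q : Set G)) :
    x ∈ centralizer (Q : Set G) := by
  refine mem_centralizer_iff.mpr fun q hq ↦ ?_
  have hS : ⁅x, q⁆ ∈ S := by
    have h := mul_mem hxS (Normal.conj_mem ‹_› _ (inv_mem hxS) q)
    rwa [← mul_assoc, ← mul_assoc] at h
  have hQ : ⁅x, q⁆ ∈ Q := mul_mem ((mem_normalizer_iff.mp hxQ q).mp hq) (inv_mem hq)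
  exact (commutatorElement_eq_one_iff_mul_comm.mp (disjoint_def.mp hSQ hS hQ)).symm

theorem conj_smul_le_inf_sup_of_mem_normal {S H Q : Subgroup G} [S.Normal] {s : G}
    (hs : s ∈ S) (hQH : Q ≤ H) (hsQH : MulAut.conj s • Q ≤ H) :
    MulAut.conj s • Q ≤ (S ⊓ H) ⊔ Q := by
  intro x hx
  obtain ⟨q, hq, rfl⟩ := (mem_smul_pointwise_iff_exists x _ Q).mp hx
  have hcomm : MulAut.conj s q * q⁻¹ ∈ S ⊓ H := by
    refine mem_inf.mpr ⟨?_, mul_mem (hsQH hx) (inv_mem (hQH hq))⟩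
    rw [MulAut.conj_apply, mul_assoc, mul_assoc]
    exact mul_mem hs (by simpa [mul_assoc] using Normal.conj_mem ‹_› _ (inv_mem hs) q)
  simpa using mul_mem (mem_sup_left hcomm) (mem_sup_right hq)

end Subgroup

namespace IsPGroup

variable {p : ℕ} [Fact p.Prime] {G : Type*} [Group G] [Finite G]

theorem disjoint_of_card_coprime {S Q : Subgroup G} (hQ : IsPGroup p Q)
    (hS : (Nat.card S).Coprime p) : Disjoint S Q := by
  obtain ⟨k, hk⟩ := hQ.exists_card_eq
  exact disjoint_of_coprime_natCard (hk ▸ hS.pow_right k)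

theorem not_dvd_index_of_sup_eq_top {N Q : Subgroup G} [N.Normal] (hQ : IsPGroup p Q)
    (hN : (Nat.card N).Coprime p) (hNQ : N ⊔ Q = ⊤) : ¬ p ∣ Q.index := by
  have hc : IsComplement' N Q := isComplement'_of_disjoint_and_mul_eq_univ
    (hQ.disjoint_of_card_coprime hN) (by rw [← normal_mul, hNQ, coe_top])
  rw [hc.index_eq_card]
  exact (Nat.Prime.coprime_iff_not_dvd Fact.out).mp hN.symm

theorem exists_le_conj_smul_of_le_sup {N Q Q' : Subgroup G} (hQN : Q ≤ normalizer (N : Set G))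
    (hN : (Nat.card N).Coprime p) (hQ : IsPGroup p Q) (hQ' : IsPGroup p Q')
    (hQ'NQ : Q' ≤ N ⊔ Q) : ∃ n ∈ N, Q' ≤ MulAut.conj n • Q := by
  set M := N ⊔ Q
  have : (N.subgroupOf M).Normal :=
    (normal_subgroupOf_iff_le_normalizer le_sup_left).mpr (sup_le le_normalizer hQN)
  have hsup : N.subgroupOf M ⊔ Q.subgroupOf M = ⊤ := by
    rw [← subgroupOf_sup le_sup_left le_sup_right, subgroupOf_self]
  have hNM : (Nat.card (N.subgroupOf M)).Coprime p := by
    rwa [Nat.card_congr (subgroupOfEquivOfLe (le_sup_left : N ≤ M)).toEquiv]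
  have hQM : IsPGroup p (Q.subgroupOf M) := hQ.of_equiv (subgroupOfEquivOfLe le_sup_right).symm
  have hindex := hQM.not_dvd_index_of_sup_eq_top hNM hsup
  obtain ⟨R, hR⟩ := (hQ'.of_equiv (subgroupOfEquivOfLe hQ'NQ).symm).exists_le_sylow
  obtain ⟨m, hm⟩ := MulAction.exists_smul_eq M (hQM.toSylow hindex) R
  rw [← hm, Sylow.coe_subgroup_smul, IsPGroup.toSylow_coe, conj_smul_subgroupOf le_sup_right] at hR
  have hQ'm : Q' ≤ MulAut.conj (m : G) • Q := fun x hx ↦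
    mem_subgroupOf.mp (hR (x := ⟨x, hQ'NQ hx⟩) (mem_subgroupOf.mpr hx))
  obtain ⟨n, hn, q, hq, hnq⟩ : (m : G) ∈ (N : Set G) * Q :=
    coe_mul_of_right_le_normalizer_left N Q hQN ▸ m.2
  refine ⟨n, hn, ?_⟩
  rwa [← hnq, map_mul, mul_smul, conj_smul_eq_self_of_mem hq] at hQ'm

end IsPGroup

theorem stmt_5_general (p : ℕ) (hp : p.Prime) (G : Type*) [Group G] [Finite G]
    (S : Subgroup G) (hS : S.Normal) (hScop : Nat.Coprime (Nat.card S) p)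
    (P : Subgroup G)
    (hfact : ∀ g : G, ∃ s ∈ S, ∃ c ∈ Subgroup.centralizer (P : Set G), g = s * c) :
    ∀ Q : Subgroup G, IsPGroup p Q → Q ≤ Subgroup.centralizer (P : Set G) →
      ∀ g ∈ Subgroup.normalizer (Q : Set G),
        ∃ s, s ∈ S ∧ s ∈ Subgroup.centralizer (Q : Set G) ∧
          ∃ c, c ∈ Subgroup.centralizer (P : Set G) ∧ c ∈ Subgroup.normalizer (Q : Set G) ∧ g = s * c := by
  have := Fact.mk hp
  intro Q hQ hQH g hg
  obtain ⟨s, hs, c, hc, rfl⟩ := hfact g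
  set H := centralizer (P : Set G)
  have hQ' : MulAut.conj s⁻¹ • Q = MulAut.conj c • Q := calc
    MulAut.conj s⁻¹ • Q = MulAut.conj s⁻¹ • MulAut.conj (s * c) • Q := by
      rw [conj_smul_eq_self_iff.mpr hg]
    _ = MulAut.conj c • Q := by rw [smul_smul, ← map_mul, inv_mul_cancel_left]
  have hQ'H : MulAut.conj s⁻¹ • Q ≤ H := hQ' ▸ conj_smul_le_of_le hQH ⟨c, hc⟩
  have hQN : Q ≤ normalizer ((S ⊓ H : Subgroup G) : Set G) := fun x hx ↦
    inf_normalizer_le_normalizer_inf ⟨le_normalizer_of_normal (mem_top x), le_normalizer (hQH hx)⟩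
  obtain ⟨a, ⟨haS, haH⟩, hle⟩ := hQ.exists_le_conj_smul_of_le_sup hQN
    (hScop.coprime_dvd_left (card_dvd_of_le inf_le_left)) (hQ.of_equiv (equivSMul _ Q))
    (conj_smul_le_inf_sup_of_mem_normal (inv_mem hs) hQH hQ'H)
  have hu : s * a ∈ normalizer (Q : Set G) := by
    refine mem_normalizer_of_le_conj_smul ?_
    rwa [map_mul, mul_smul, subset_pointwise_smul_iff, ← map_inv]
  have hsa : s * a ∈ S := mul_mem hs haS
  refine ⟨s * a, hsa,
    mem_centralizer_of_mem_normalizer_of_disjoint (hQ.disjoint_of_card_coprime hScop) hsa hu,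
    a⁻¹ * c, mul_mem (inv_mem haH) hc, ?_, by group⟩
  simpa [mul_assoc] using mul_mem (inv_mem hu) hg

/-- With `S ⊴ G` of order coprime to `p` and `P` a `p`-subgroup with
`G = S·C_G(P)`, for every `p`-subgroup `Q ≤ C_G(P)` one has the factorisation
`N_G(Q) = C_S(Q) · N_{C_G(P)}(Q)`. -/
theorem stmt_5 (p : ℕ) (hp : p.Prime) (G : Type*) [Group G] [Finite G]
    (S : Subgroup G) (hS : S.Normal) (hScop : Nat.Coprime (Nat.card S) p)
    (P : Subgroup G) (hP : IsPGroup p P)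
    (hfact : ∀ g : G, ∃ s ∈ S, ∃ c ∈ Subgroup.centralizer (P : Set G), g = s * c) :
    ∀ Q : Subgroup G, IsPGroup p Q → Q ≤ Subgroup.centralizer (P : Set G) →
      ∀ g ∈ Subgroup.normalizer (Q : Set G),
        ∃ s, s ∈ S ∧ s ∈ Subgroup.centralizer (Q : Set G) ∧
          ∃ c, c ∈ Subgroup.centralizer (P : Set G) ∧ c ∈ Subgroup.normalizer (Q : Set G) ∧ g = s * c :=
  stmt_5_general p hp G S hS hScop P hfact
end

section
/- Let p be a prime, G a finite group, S a normal subgroup of G of order coprime to p, and P a p-subgroup of G such that G = S·C_G(P). Then for every x ∈ P and every g ∈ G, if g·x·g⁻¹ ∈ C_G(P) then g·x·g⁻¹ = x. Equivalently, the intersection of the conjugacy class of x in G with C_G(P) is exactly {x}. -/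
/-- With `S ⊴ G` of order coprime to `p` and `P` a `p`-subgroup with
`G = S·C_G(P)`, no proper conjugate of an element `x ∈ P` lies in `C_G(P)`:
the intersection of the conjugacy class of `x` with `C_G(P)` is `{x}`. -/
theorem stmt_10 (p : ℕ) (hp : p.Prime) (G : Type*) [Group G] [Finite G]
    (S : Subgroup G) (hS : S.Normal) (hScop : Nat.Coprime (Nat.card S) p)
    (P : Subgroup G) (hP : IsPGroup p P)
    (hfact : ∀ g : G, ∃ s ∈ S, ∃ c ∈ Subgroup.centralizer (P : Set G), g = s * c) :
    ∀ x ∈ P,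
      (∀ g : G, g * x * g⁻¹ ∈ Subgroup.centralizer (P : Set G) → g * x * g⁻¹ = x) ∧
      ({y : G | ∃ g : G, y = g * x * g⁻¹} ∩ (Subgroup.centralizer (P : Set G) : Set G)
        = {x}) := by
  -- key: any element of S of p-power order is 1
  have key : ∀ z ∈ S, (∃ k : ℕ, z ^ p ^ k = 1) → z = 1 := by
    rintro z hz ⟨k, hk⟩
    have h1 : orderOf z ∣ p ^ k := orderOf_dvd_of_pow_eq_one hk
    have h2 : orderOf z ∣ Nat.card S := S.orderOf_dvd_natCard hz
    have hco : Nat.Coprime (p ^ k) (Nat.card S) := (hScop.symm.pow_left k)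
    have : orderOf z ∣ Nat.gcd (p ^ k) (Nat.card S) := Nat.dvd_gcd h1 h2
    rw [hco] at this
    exact orderOf_eq_one_iff.mp (Nat.dvd_one.mp this)
  -- every element of P has p-power order (in G)
  have ppow : ∀ y ∈ P, ∃ k : ℕ, y ^ p ^ k = 1 := by
    intro y hy
    obtain ⟨k, hk⟩ := hP ⟨y, hy⟩
    exact ⟨k, by simpa [← Subgroup.coe_pow, Subgroup.coe_mk] using congrArg (Subtype.val) hk⟩
  intro x hx
  obtain ⟨k, hxk⟩ := ppow x hx
  have part1 : ∀ g : G, g * x * g⁻¹ ∈ Subgroup.centralizer (P : Set G) → g * x * g⁻¹ = x := by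
    intro g hg
    obtain ⟨s, hs, c, hc, rfl⟩ := hfact g
    set h := s * c * x * (s * c)⁻¹ with hh
    have hcx : c * x * c⁻¹ = x := by
      have h2 := (Subgroup.mem_centralizer_iff.mp hc) x hx
      rw [show c * x = x * c from h2.symm]
      group
    have hconj : h = s * x * s⁻¹ := by
      rw [hh, mul_inv_rev, show s * c * x * (c⁻¹ * s⁻¹) = s * (c * x * c⁻¹) * s⁻¹ by group, hcx]
    -- h commutes with x, since h centralizes P ∋ x
    have hcomm : Commute h x := ((Subgroup.mem_centralizer_iff.mp hg) x hx).symm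
    -- h * x⁻¹ ∈ S
    have hmem : h * x⁻¹ ∈ S := by
      rw [hconj]
      have : s * x * s⁻¹ * x⁻¹ = s * (x * s⁻¹ * x⁻¹) := by group
      rw [this]
      exact S.mul_mem hs (hS.conj_mem s⁻¹ (S.inv_mem hs) x)
    -- (h * x⁻¹)^(p^k) = 1
    have hpow : (h * x⁻¹) ^ p ^ k = 1 := by
      rw [hcomm.inv_right.mul_pow, inv_pow, hxk, inv_one, mul_one, hh]
      rw [show s * c * x * (s * c)⁻¹ = (s * c) * x * (s * c)⁻¹ by group, conj_pow, hxk]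
      group
    have := key _ hmem ⟨k, hpow⟩
    simpa [hh] using mul_inv_eq_one.mp this
  refine ⟨part1, ?_⟩
  -- x itself centralizes P
  have hxc : x ∈ Subgroup.centralizer (P : Set G) := by
    rw [Subgroup.mem_centralizer_iff]
    intro y hy
    obtain ⟨s, hs, c, hc, hxe⟩ := hfact x
    have hcy : c * y * c⁻¹ = y := by
      have h2 := (Subgroup.mem_centralizer_iff.mp hc) y hy
      rw [show c * y = y * c from h2.symm]
      group
    have hconj : x * y * x⁻¹ = s * y * s⁻¹ := by
      rw [hxe, mul_inv_rev, show s * c * y * (c⁻¹ * s⁻¹) = s * (c * y * c⁻¹) * s⁻¹ by group, hcy]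
    have hmemS : x * y * x⁻¹ * y⁻¹ ∈ S := by
      rw [hconj, show s * y * s⁻¹ * y⁻¹ = s * (y * s⁻¹ * y⁻¹) by group]
      exact S.mul_mem hs (hS.conj_mem s⁻¹ (S.inv_mem hs) y)
    have hmemP : x * y * x⁻¹ * y⁻¹ ∈ P := by
      exact P.mul_mem (P.mul_mem (P.mul_mem hx hy) (P.inv_mem hx)) (P.inv_mem hy)
    have := key _ hmemS (ppow _ hmemP)
    have hxy : x * y * x⁻¹ = y := mul_inv_eq_one.mp this
    have : x * y = y * x := by
      have := congrArg (· * x) hxy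
      simpa [mul_assoc] using this
    exact this.symm
  ext y
  constructor
  · rintro ⟨⟨g, rfl⟩, hyc⟩
    exact part1 g hyc
  · rintro rfl
    exact ⟨⟨1, by group⟩, hxc⟩
end

section
/- Let p be a prime, G a finite group, S a normal subgroup of G of order coprime to p, and P a p-subgroup of G such that G = S·C_G(P). Let k be a commutative ring and, for x ∈ P, let K_x ∈ k[G] denote the class sum of x. Then the k-linear truncation map k[G] → k[C_G(P)] sending Σ a_g·g to Σ_{g ∈ C_G(P)} a_g·g sends K_x to the basis element x. -/
open scoped Classical in
/-- The class sum of `x` in the group algebra `k[G]`: the sum of the elements of the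
conjugacy class of `x` in `G`. -/
noncomputable def classSum (k : Type*) [CommRing k] {G : Type*} [Group G] [Fintype G]
    (x : G) : MonoidAlgebra k G :=
  ∑ g : G, if ∃ c : G, g = c * x * c⁻¹ then MonoidAlgebra.single g (1 : k) else 0

/-- The `k`-linear truncation map `k[G] → k[H]`, sending `Σ a_g·g` to `Σ_{g ∈ H} a_g·g`. -/
noncomputable def trunc (k : Type*) [CommRing k] {G : Type*} [Group G] (H : Subgroup G)
    (a : MonoidAlgebra k G) : MonoidAlgebra k H :=
  MonoidAlgebra.ofCoeff (Finsupp.comapDomain Subtype.val a.coeff Subtype.val_injective.injOn)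

/-! Elements of `S` have order prime to `p`, while `x ∈ P` has `p`-power order. Writing
`x = s c` with `s ∈ S`, `c ∈ C_G(P)`, the element `c` commutes with `x`, so `s ^ pⁿ = c ^ (-pⁿ)` lies
in `C_G(P)`, and hence so does `s`, a power of `s ^ pⁿ`; thus `x ∈ C_G(P)`. If a conjugate
`(s c) x (s c)⁻¹ = s x s⁻¹` lies in `C_G(P)`, it commutes with `x`, so the commutator
`s x s⁻¹ x⁻¹ ∈ S` has `p`-power order and is trivial. Hence `x` is the only conjugate of `x` in
`C_G(P)`, and the truncation of `K_x` is `x`. -/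

namespace Subgroup

variable {G : Type*} [Group G] {S : Subgroup G} {m : ℕ}

theorem eq_one_of_pow_eq_one_of_coprime (hm : (Nat.card S).Coprime m) {t : G} (ht : t ∈ S)
    (htm : t ^ m = 1) : t = 1 :=
  orderOf_eq_one_iff.mp <|
    Nat.eq_one_of_dvd_coprimes hm (S.orderOf_dvd_natCard ht) (orderOf_dvd_of_pow_eq_one htm)

theorem mem_of_pow_mem_of_coprime {H : Subgroup G} (hm : (Nat.card S).Coprime m) {s : G}
    (hs : s ∈ S) (h : s ^ m ∈ H) : s ∈ H := by
  obtain ⟨a, ha⟩ :=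
    exists_pow_eq_self_of_coprime (hm.coprime_dvd_left (S.orderOf_dvd_natCard hs)).symm
  exact ha ▸ pow_mem h a

variable {P : Subgroup G}
  (hSC : ∀ g : G, ∃ s ∈ S, ∃ c ∈ centralizer (P : Set G), g = s * c)
  (hm : (Nat.card S).Coprime m) {x : G} (hx : x ∈ P) (hxm : x ^ m = 1)
include hSC hm hx hxm

theorem mem_centralizer_of_pow_eq_one :
    x ∈ centralizer (P : Set G) := by
  obtain ⟨s, hs, c, hc, rfl⟩ := hSC x
  have hcomm : Commute (s * c) c := mem_centralizer_iff.mp hc _ hx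
  have hsm : s ^ m = c⁻¹ ^ m :=
    calc s ^ m = (s * c * c⁻¹) ^ m := by group
      _ = (s * c) ^ m * c⁻¹ ^ m := hcomm.inv_right.mul_pow m
      _ = c⁻¹ ^ m := by rw [hxm, one_mul]
  exact mul_mem (mem_of_pow_mem_of_coprime hm hs (hsm ▸ pow_mem (inv_mem hc) m)) hc

theorem conj_eq_self_of_conj_mem_centralizer (hS : S.Normal) {g : G} (hg : g * x * g⁻¹ ∈ centralizer (P : Set G)) : g * x * g⁻¹ = x := by
  obtain ⟨s, hs, c, hc, rfl⟩ := hSC g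
  have hcx : c * x * c⁻¹ = x := by
    rw [← mem_centralizer_iff.mp hc x hx, mul_inv_cancel_right]
  have hconj : s * c * x * (s * c)⁻¹ = s * x * s⁻¹ :=
    calc s * c * x * (s * c)⁻¹ = s * (c * x * c⁻¹) * s⁻¹ := by group
      _ = s * x * s⁻¹ := by rw [hcx]
  rw [hconj] at hg ⊢
  have hcomm : Commute (s * x * s⁻¹) x := (mem_centralizer_iff.mp hg x hx).symm
  have htS : s * x * s⁻¹ * x⁻¹ ∈ S := by
    rw [show s * x * s⁻¹ * x⁻¹ = s * (x * s⁻¹ * x⁻¹) by group]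
    exact mul_mem hs (hS.conj_mem _ (inv_mem hs) x)
  have htm : (s * x * s⁻¹ * x⁻¹) ^ m = 1 := by
    rw [hcomm.inv_right.mul_pow, conj_pow, hxm, inv_pow, hxm]; group
  exact mul_inv_eq_one.mp (eq_one_of_pow_eq_one_of_coprime hm htS htm)

end Subgroup

open scoped Classical in
theorem classSum_coeff (k : Type*) [CommRing k] {G : Type*} [Group G] [Fintype G] (x h : G) :
    (classSum k x).coeff h = if ∃ c : G, h = c * x * c⁻¹ then 1 else 0 := by
  rw [classSum, MonoidAlgebra.coeff_sum, Finsupp.finsetSum_apply, Finset.sum_eq_single h]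
  · split_ifs <;> simp [MonoidAlgebra.coeff_single]
  · intro g _ hgh
    split_ifs <;> simp [MonoidAlgebra.coeff_single, hgh]
  · simp

theorem trunc_coeff (k : Type*) [CommRing k] {G : Type*} [Group G] (H : Subgroup G)
    (a : MonoidAlgebra k G) (h : H) : (trunc k H a).coeff h = a.coeff h :=
  Finsupp.comapDomain_apply _ _ _ _

theorem stmt_12_general (p : ℕ) (G : Type*) [Group G] [Fintype G]
    (S : Subgroup G) (hS : S.Normal) (hScop : Nat.Coprime (Nat.card S) p)
    (P : Subgroup G) (hP : IsPGroup p P)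
    (hfact : ∀ g : G, ∃ s ∈ S, ∃ c ∈ Subgroup.centralizer (P : Set G), g = s * c)
    (k : Type*) [CommRing k] (x : G) (hx : x ∈ P) :
    ∃ hxc : x ∈ Subgroup.centralizer (P : Set G),
      trunc k (Subgroup.centralizer (P : Set G)) (classSum k x)
        = MonoidAlgebra.single (⟨x, hxc⟩ : Subgroup.centralizer (P : Set G)) (1 : k) := by
  classical
  obtain ⟨n, hn⟩ := hP ⟨x, hx⟩
  have hxn : x ^ p ^ n = 1 := by simpa using congrArg Subtype.val hn
  have hcop := hScop.pow_right n
  refine ⟨Subgroup.mem_centralizer_of_pow_eq_one hfact hcop hx hxn, ?_⟩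
  ext ⟨h, hh⟩
  have hconj : (∃ c : G, h = c * x * c⁻¹) ↔ h = x :=
    ⟨fun ⟨c, hc⟩ =>
      hc ▸ Subgroup.conj_eq_self_of_conj_mem_centralizer hfact hcop hx hxn hS (hc ▸ hh),
      fun e => ⟨1, by simp [e]⟩⟩
  rw [trunc_coeff, classSum_coeff, MonoidAlgebra.coeff_single, if_congr hconj rfl rfl]
  simp [Finsupp.single_apply, Subtype.ext_iff, eq_comm]

/-- With `S ⊴ G` of order coprime to `p` and `P` a `p`-subgroup with
`G = S·C_G(P)`, for `x ∈ P` the truncation map `k[G] → k[C_G(P)]` sends the class sum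
`K_x` to the basis element `x` (in particular `x` lies in `C_G(P)`). -/
theorem stmt_12 (p : ℕ) (hp : p.Prime) (G : Type*) [Group G] [Fintype G]
    (S : Subgroup G) (hS : S.Normal) (hScop : Nat.Coprime (Nat.card S) p)
    (P : Subgroup G) (hP : IsPGroup p P)
    (hfact : ∀ g : G, ∃ s ∈ S, ∃ c ∈ Subgroup.centralizer (P : Set G), g = s * c)
    (k : Type*) [CommRing k] (x : G) (hx : x ∈ P) :
    ∃ hxc : x ∈ Subgroup.centralizer (P : Set G),
      trunc k (Subgroup.centralizer (P : Set G)) (classSum k x)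
        = MonoidAlgebra.single (⟨x, hxc⟩ : Subgroup.centralizer (P : Set G)) (1 : k) :=
  stmt_12_general p G S hS hScop P hP hfact k x hx
end

section
/- Let p be a prime, G a finite group, S a normal subgroup of G of order coprime to p, and P a p-subgroup of G such that G = S·C_G(P). Let D be a p-subgroup of G with P ≤ D ≤ C_G(P). Then N_G(D) ≤ C_G(P). -/
/-! Write `g ∈ N_G(D)` as `g = s c` with `s ∈ S` and `c ∈ C_G(P)`. For `x ∈ P`, conjugation by `g`
and by `s` agree on `x`, so the commutator `⁅s, x⁆ = (s x s⁻¹) x⁻¹` lies in `D`; it also lies in the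
normal subgroup `S`. A `p`-group meets a group of order prime to `p` trivially, so `⁅s, x⁆ = 1`. -/

namespace Subgroup

open scoped commutatorElement

variable {G : Type*} [Group G]

theorem commute_of_conj_mem_of_disjoint {S D : Subgroup G} [S.Normal] (hSD : Disjoint S D)
    {s x : G} (hs : s ∈ S) (hx : x ∈ D) (hsx : s * x * s⁻¹ ∈ D) : Commute s x := by
  have hS : ⁅s, x⁆ ∈ S := commutator_le_left S ⊤ (commutator_mem_commutator hs (mem_top x))
  have hD : ⁅s, x⁆ ∈ D := by
    rw [commutatorElement_def]
    exact mul_mem hsx (inv_mem hx)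
  exact commutatorElement_eq_one_iff_commute.mp (disjoint_def.mp hSD hS hD)

theorem conj_mem_of_mul_mem_normalizer {D : Subgroup G} {s c x : G}
    (hsc : s * c ∈ normalizer (D : Set G)) (hcx : Commute c x) (hx : x ∈ D) :
    s * x * s⁻¹ ∈ D := by
  have hconj : s * c * x * (s * c)⁻¹ = s * x * s⁻¹ := by
    rw [mul_inv_rev, mul_assoc s c x, hcx.eq]
    group
  exact hconj ▸ (mem_normalizer_iff.mp hsc x).mp hx

end Subgroup

theorem stmt_13_general (p : ℕ) (G : Type*) [Group G]
    (S : Subgroup G) (hS : S.Normal) (hScop : Nat.Coprime (Nat.card S) p)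
    (P : Subgroup G)
    (hfact : ∀ g : G, ∃ s ∈ S, ∃ c ∈ Subgroup.centralizer (P : Set G), g = s * c)
    (D : Subgroup G) (hD : IsPGroup p D) (hPD : P ≤ D) :
    Subgroup.normalizer (D : Set G) ≤ Subgroup.centralizer (P : Set G) := by
  intro g hg
  obtain ⟨s, hs, c, hc, rfl⟩ := hfact g
  have hSD : Disjoint S D := (IsPGroup.card (G := S)).disjoint_of_coprime hD hScop
  refine mul_mem (Subgroup.mem_centralizer_iff.mpr fun x hx => ?_) hc
  have hcx : Commute c x := ((Subgroup.mem_centralizer_iff.mp hc) x hx).symm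
  exact (Subgroup.commute_of_conj_mem_of_disjoint hSD hs (hPD hx)
    (Subgroup.conj_mem_of_mul_mem_normalizer hg hcx (hPD hx))).eq.symm

/-- With `S ⊴ G` of order coprime to `p` and `P` a `p`-subgroup with
`G = S·C_G(P)`, any `p`-subgroup `D` with `P ≤ D ≤ C_G(P)` satisfies `N_G(D) ≤ C_G(P)`. -/
theorem stmt_13 (p : ℕ) (hp : p.Prime) (G : Type*) [Group G] [Finite G]
    (S : Subgroup G) (hS : S.Normal) (hScop : Nat.Coprime (Nat.card S) p)
    (P : Subgroup G) (hP : IsPGroup p P)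
    (hfact : ∀ g : G, ∃ s ∈ S, ∃ c ∈ Subgroup.centralizer (P : Set G), g = s * c)
    (D : Subgroup G) (hD : IsPGroup p D) (hPD : P ≤ D)
    (hDC : D ≤ Subgroup.centralizer (P : Set G)) :
    Subgroup.normalizer (D : Set G) ≤ Subgroup.centralizer (P : Set G) :=
  stmt_13_general p G S hS hScop P hfact D hD hPD
end
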